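/- arXiv:0802.4242 — 4 statements merged into one kernel-verified Lean document; each statement's English description precedes it below -/
import Mathlib

section
/- If f(x) = a_n x^n + ... + a_1 x + a_0 is a polynomial with strictly positive real coefficients, then every complex root θ of f satisfies min{a_{i-1}/a_i : 1 ≤ i ≤ n} ≤ |θ| ≤ max{a_{i-1}/a_i : 1 ≤ i ≤ n}. -/
/-!
Multiply `f` by `X - c`. The coefficients of `(X - c) f` are `-c a₀`, `aᵢ₋₁ - c aᵢ` and `aₙ`, so
for `c` the largest ratio `aᵢ₋₁ / aᵢ` all of them except the leading one are `≤ 0`, and for `c`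
the smallest ratio all of them except the constant one are `≥ 0`. At a root `θ`, the triangle
inequality applied to the exceptional term against the others turns these sign patterns into
`(t - c) f(t) ≤ 0`, resp. `≥ 0`, at `t = ‖θ‖`; since `f(t) > 0`, this gives `t ≤ c`, resp. `c ≤ t`.
-/

open Polynomial Finset

theorem norm_coeff_mul_pow_le_sum_of_isRoot {K : Type*} [NormedField K] {p : K[X]} {z : K}
    (hz : p.IsRoot z) {k : ℕ} (hk : k ≤ p.natDegree) :
    ‖p.coeff k‖ * ‖z‖ ^ k ≤ ∑ i ∈ (range (p.natDegree + 1)).erase k, ‖p.coeff i‖ * ‖z‖ ^ i := by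
  have hsum := p.eval_eq_sum_range z
  rw [hz.eq_zero, ← add_sum_erase _ _ (mem_range.2 (Nat.lt_succ_of_le hk))] at hsum
  calc ‖p.coeff k‖ * ‖z‖ ^ k = ‖p.coeff k * z ^ k‖ := by rw [norm_mul, norm_pow]
    _ = ‖∑ i ∈ (range (p.natDegree + 1)).erase k, p.coeff i * z ^ i‖ := by
      rw [eq_neg_of_add_eq_zero_left hsum.symm, norm_neg]
    _ ≤ ∑ i ∈ (range (p.natDegree + 1)).erase k, ‖p.coeff i * z ^ i‖ := norm_sum_le _ _
    _ = ∑ i ∈ (range (p.natDegree + 1)).erase k, ‖p.coeff i‖ * ‖z‖ ^ i := by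
      simp only [norm_mul, norm_pow]

theorem abs_coeff_mul_pow_le_sum_of_isRoot_map {p : ℝ[X]} {z : ℂ}
    (hz : (p.map (algebraMap ℝ ℂ)).IsRoot z) {k : ℕ} (hk : k ≤ p.natDegree) :
    |p.coeff k| * ‖z‖ ^ k ≤ ∑ i ∈ (range (p.natDegree + 1)).erase k, |p.coeff i| * ‖z‖ ^ i := by
  have := norm_coeff_mul_pow_le_sum_of_isRoot hz (k := k) (by rwa [natDegree_map])
  simpa only [natDegree_map, coeff_map, Complex.coe_algebraMap, Complex.norm_real,
    Real.norm_eq_abs] using this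

theorem eval_norm_nonpos_of_coeff_nonpos {p : ℝ[X]} (hp : ∀ i < p.natDegree, p.coeff i ≤ 0)
    {z : ℂ} (hz : (p.map (algebraMap ℝ ℂ)).IsRoot z) : p.eval ‖z‖ ≤ 0 := by
  have hm := mem_range.2 p.natDegree.lt_succ_self
  have hbound := abs_coeff_mul_pow_le_sum_of_isRoot_map hz le_rfl
  have hneg : ∑ i ∈ (range (p.natDegree + 1)).erase p.natDegree, |p.coeff i| * ‖z‖ ^ i =
      -∑ i ∈ (range (p.natDegree + 1)).erase p.natDegree, p.coeff i * ‖z‖ ^ i := by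
    rw [← sum_neg_distrib]
    refine sum_congr rfl fun i hi => ?_
    obtain ⟨hne, hle⟩ := mem_erase.1 hi
    have hi' : i < p.natDegree := by have := mem_range.1 hle; omega
    rw [abs_of_nonpos (hp i hi'), neg_mul]
  rw [eval_eq_sum_range, ← add_sum_erase _ _ hm]
  nlinarith [le_abs_self (p.coeff p.natDegree), pow_nonneg (norm_nonneg z) p.natDegree]

theorem eval_norm_nonneg_of_coeff_nonneg {p : ℝ[X]} (hp : ∀ i, 0 < i → 0 ≤ p.coeff i)
    {z : ℂ} (hz : (p.map (algebraMap ℝ ℂ)).IsRoot z) : 0 ≤ p.eval ‖z‖ := by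
  have h0 := mem_range.2 p.natDegree.succ_pos
  have hbound := abs_coeff_mul_pow_le_sum_of_isRoot_map hz (Nat.zero_le _)
  have hpos : ∑ i ∈ (range (p.natDegree + 1)).erase 0, |p.coeff i| * ‖z‖ ^ i =
      ∑ i ∈ (range (p.natDegree + 1)).erase 0, p.coeff i * ‖z‖ ^ i :=
    sum_congr rfl fun i hi => by
      rw [abs_of_nonneg (hp i (Nat.pos_of_ne_zero (mem_erase.1 hi).1))]
  rw [eval_eq_sum_range, ← add_sum_erase _ _ h0]
  simp only [pow_zero, mul_one] at hbound ⊢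
  linarith [neg_abs_le (p.coeff 0)]

theorem eval_pos_of_coeff_pos {p : ℝ[X]} (hp : ∀ i ≤ p.natDegree, 0 < p.coeff i) {t : ℝ}
    (ht : 0 ≤ t) : 0 < p.eval t := by
  rw [eval_eq_sum_range]
  refine sum_pos' (fun i hi => ?_) ⟨0, mem_range.2 p.natDegree.succ_pos, by simpa using hp 0⟩
  exact mul_nonneg (hp i (Nat.lt_succ_iff.1 (mem_range.1 hi))).le (pow_nonneg ht i)

theorem natDegree_X_sub_C_mul {R : Type*} [Ring R] [Nontrivial R] {f : R[X]} (hf : f ≠ 0)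
    (c : R) : ((X - C c) * f).natDegree = f.natDegree + 1 := by
  rw [(monic_X_sub_C c).natDegree_mul' hf, natDegree_X_sub_C, add_comm]

theorem norm_le_of_coeff_le_mul_coeff_succ {f : ℝ[X]} (hpos : ∀ i ≤ f.natDegree, 0 < f.coeff i)
    {B : ℝ} (hB : ∀ i < f.natDegree, f.coeff i ≤ B * f.coeff (i + 1)) {z : ℂ}
    (hz : (f.map (algebraMap ℝ ℂ)).IsRoot z) : ‖z‖ ≤ B := by
  have hf : f ≠ 0 := fun h => (hpos 0 (Nat.zero_le _)).ne' (by simp [h])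
  have hn : 0 < f.natDegree := by
    rw [← natDegree_map (algebraMap ℝ ℂ), natDegree_pos_iff_degree_pos]
    exact degree_pos_of_root ((Polynomial.map_ne_zero_iff (algebraMap ℝ ℂ).injective).2 hf) hz
  have hB0 : 0 ≤ B := by nlinarith [hB 0 hn, hpos 0 hn.le, hpos 1 hn]
  have hcoeff : ∀ i < ((X - C B) * f).natDegree, ((X - C B) * f).coeff i ≤ 0 := by
    rw [natDegree_X_sub_C_mul hf]
    rintro (_ | i) hi
    · simpa [mul_coeff_zero] using mul_nonneg hB0 (hpos 0 hn.le).le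
    · rw [coeff_X_sub_C_mul]
      linarith [hB i (by omega)]
  have key := eval_norm_nonpos_of_coeff_nonpos hcoeff (z := z) (by simp [hz.eq_zero])
  rw [eval_mul, eval_sub, eval_X, eval_C] at key
  exact sub_nonpos.1 (nonpos_of_mul_nonpos_left key (eval_pos_of_coeff_pos hpos (norm_nonneg z)))

theorem le_norm_of_mul_coeff_succ_le {f : ℝ[X]} (hpos : ∀ i ≤ f.natDegree, 0 < f.coeff i)
    {β : ℝ} (hβ : ∀ i < f.natDegree, β * f.coeff (i + 1) ≤ f.coeff i) {z : ℂ}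
    (hz : (f.map (algebraMap ℝ ℂ)).IsRoot z) : β ≤ ‖z‖ := by
  have hcoeff : ∀ i, 0 < i → 0 ≤ ((X - C β) * f).coeff i := by
    rintro (_ | i) hi
    · omega
    rw [coeff_X_sub_C_mul, sub_nonneg]
    rcases lt_or_ge i f.natDegree with hi | hi
    · exact hβ i hi
    · rw [coeff_eq_zero_of_natDegree_lt (by omega), mul_zero]
      rcases hi.eq_or_lt with rfl | hi
      · exact (hpos _ le_rfl).le
      · exact (coeff_eq_zero_of_natDegree_lt hi).ge
  have key := eval_norm_nonneg_of_coeff_nonneg hcoeff (z := z) (by simp [hz.eq_zero])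
  rw [eval_mul, eval_sub, eval_X, eval_C] at key
  exact sub_nonneg.1 (nonneg_of_mul_nonneg_left key (eval_pos_of_coeff_pos hpos (norm_nonneg z)))

/-- Eneström–Kakeya theorem (1893): if `f` has strictly positive real coefficients, every
complex root `θ` satisfies `min_{1≤i≤n} a_{i-1}/a_i ≤ |θ| ≤ max_{1≤i≤n} a_{i-1}/a_i`. -/
theorem enestrom_kakeya (f : Polynomial ℝ) (hn : 1 ≤ f.natDegree)
    (hpos : ∀ i ≤ f.natDegree, 0 < f.coeff i) (θ : ℂ)
    (hθ : (f.map (algebraMap ℝ ℂ)).eval θ = 0) :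
    ((Finset.Icc 1 f.natDegree).inf'
        (Finset.nonempty_Icc.mpr hn) fun i => f.coeff (i - 1) / f.coeff i) ≤ ‖θ‖ ∧
    ‖θ‖ ≤ (Finset.Icc 1 f.natDegree).sup'
        (Finset.nonempty_Icc.mpr hn) fun i => f.coeff (i - 1) / f.coeff i := by
  have mem : ∀ i < f.natDegree, i + 1 ∈ Icc 1 f.natDegree := fun i hi => mem_Icc.2 ⟨by omega, hi⟩
  refine ⟨le_norm_of_mul_coeff_succ_le hpos (fun i hi => ?_) hθ,
    norm_le_of_coeff_le_mul_coeff_succ hpos (fun i hi => ?_) hθ⟩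
  · rw [← le_div_iff₀ (hpos _ hi)]
    exact (inf'_le _ (mem i hi)).trans_eq (by simp)
  · rw [← div_le_iff₀ (hpos _ hi)]
    exact (le_sup' (fun i => f.coeff (i - 1) / f.coeff i) (mem i hi)).trans_eq' (by simp)
end

section
/- If z_1 ≥ 1, z_2 ≥ 1, ..., z_n ≥ 1 are real numbers and σ_k denotes the k-th elementary symmetric function of z_1, ..., z_n, then σ_k ≤ C(n-1, k-1) · (z_1 z_2 ⋯ z_n) + C(n-1, k) for all 1 ≤ k ≤ n. -/
/-!
Removing a point `a` from an index set of size `m + 2` gives `σ_k = σ'_k + z_a σ'_{k-1}`. Bounding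
both terms by induction and comparing with Pascal's rule `C(m+1, k) = C(m, k-1) + C(m, k)`, the two
sides differ by `C(m, k-1) (z_a - 1) (P - 1) ≥ 0`, where `P ≥ 1` is the product of the other `z_i`.
-/

open Finset

variable {ι : Type*}

lemma sum_powersetCard_succ_insert_prod [DecidableEq ι] {R : Type*} [CommSemiring R]
    {s : Finset ι} {a : ι} (ha : a ∉ s) (z : ι → R) (k : ℕ) :
    ∑ t ∈ (insert a s).powersetCard (k + 1), ∏ i ∈ t, z i =
      ∑ t ∈ s.powersetCard (k + 1), ∏ i ∈ t, z i + z a * ∑ t ∈ s.powersetCard k, ∏ i ∈ t, z i := by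
  have ha' : ∀ t ∈ s.powersetCard k, a ∉ t := fun t ht hat =>
    ha ((mem_powersetCard.mp ht).1 hat)
  have hdisj : Disjoint (s.powersetCard (k + 1)) ((s.powersetCard k).image (insert a)) := by
    refine disjoint_left.mpr fun t ht ht' => ?_
    obtain ⟨u, -, rfl⟩ := mem_image.mp ht'
    exact ha ((mem_powersetCard.mp ht).1 (mem_insert_self a u))
  rw [powersetCard_succ_insert ha, sum_union hdisj,
    sum_image fun u hu v hv huv => by
      rw [← erase_insert (ha' u hu), ← erase_insert (ha' v hv), huv],
    mul_sum]
  congr 1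
  exact sum_congr rfl fun t ht => prod_insert (ha' t ht)

lemma add_mul_le_of_pascal_bounds {A B P b c d z : ℝ} (hA : A ≤ c * P + d) (hB : B ≤ b * P + c)
    (hz : 1 ≤ z) (hP : 1 ≤ P) (hc : 0 ≤ c) :
    A + z * B ≤ (b + c) * (z * P) + (c + d) := by
  nlinarith [mul_le_mul_of_nonneg_left hB (by linarith : (0 : ℝ) ≤ z),
    mul_nonneg hc (mul_nonneg (sub_nonneg.mpr hz) (sub_nonneg.mpr hP))]

theorem sum_powersetCard_prod_le [DecidableEq ι] {s : Finset ι} (hs : s.Nonempty) {z : ι → ℝ}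
    (hz : ∀ i ∈ s, 1 ≤ z i) (k : ℕ) :
    ∑ t ∈ s.powersetCard (k + 1), ∏ i ∈ t, z i ≤
      ((#s - 1).choose k : ℝ) * ∏ i ∈ s, z i + ((#s - 1).choose (k + 1) : ℝ) := by
  induction hs using Finset.Nonempty.cons_induction generalizing k with
  | singleton a =>
    cases k with
    | zero => simp [powersetCard_one]
    | succ j => simp [powersetCard_eq_empty.mpr (by simp : #{a} < j + 2)]
  | cons a s ha hs ih =>
    have hzs : ∀ i ∈ s, 1 ≤ z i := fun i hi => hz i (mem_cons_of_mem hi)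
    have hza : 1 ≤ z a := hz a (mem_cons_self a s)
    obtain ⟨m, hm⟩ : ∃ m, #s = m + 1 := Nat.exists_eq_succ_of_ne_zero hs.card_pos.ne'
    have ih' := fun j => ih hzs j
    simp only [hm, Nat.add_sub_cancel] at ih'
    -- `b = C(m, k - 1)`, to be read as `0` when `k = 0`
    have hlower : ∃ b : ℝ, ∑ t ∈ s.powersetCard k, ∏ i ∈ t, z i ≤
        b * ∏ i ∈ s, z i + (m.choose k : ℝ) ∧ b + m.choose k = (m + 1).choose k := by
      cases k with
      | zero => exact ⟨0, by simp, by simp⟩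
      | succ j => exact ⟨m.choose j, ih' j, by push_cast [Nat.choose_succ_succ]; ring⟩
    obtain ⟨b, hB, hb⟩ := hlower
    rw [cons_eq_insert, sum_powersetCard_succ_insert_prod ha, card_insert_of_notMem ha,
      prod_insert ha, hm, Nat.add_sub_cancel, ← hb, Nat.choose_succ_succ', Nat.cast_add]
    exact add_mul_le_of_pascal_bounds (ih' k) hB hza (one_le_prod hzs) (Nat.cast_nonneg _)

/-- Mignotte's symmetric function inequality: if `z_i ≥ 1` for all `i`, then the `k`-th
elementary symmetric function satisfies
`σ_k ≤ C(n-1, k-1) · (z_1 ⋯ z_n) + C(n-1, k)` for `1 ≤ k ≤ n`. -/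
theorem esymm_le (n : ℕ) (z : Fin n → ℝ) (hz : ∀ i, 1 ≤ z i) (k : ℕ) (hk1 : 1 ≤ k)
    (hkn : k ≤ n) :
    ∑ t ∈ Finset.powersetCard k Finset.univ, ∏ i ∈ t, z i ≤
      ((n - 1).choose (k - 1) : ℝ) * ∏ i, z i + ((n - 1).choose k : ℝ) := by
  obtain ⟨j, rfl⟩ := Nat.exists_eq_add_of_le' hk1
  have hne : (univ : Finset (Fin n)).Nonempty := univ_nonempty_iff.mpr ⟨⟨0, by omega⟩⟩
  simpa using sum_powersetCard_prod_le hne (fun i _ => hz i) j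
end

section
/- If g(x) = b_m x^m + ... + b_0 divides f(x) = a_n x^n + ... + a_0 in ℤ[x], both nonzero, and g has the same leading coefficient sign convention, then for each k, |b_k| ≤ C(m, k) · M(f) where M(f) is the Mahler measure of f; in particular |b_k| ≤ C(m, k) · ‖f‖_2 · 2^0 holds via M(f) ≤ ‖f‖_2 (Landau's inequality). -/
/-!
The Mahler measure is multiplicative and is at least `1` on nonzero integer polynomials (their
leading coefficient is a nonzero integer), so a factor `g` of `f` in `ℤ[X]` has `M(g) ≤ M(f)`.
Vieta's formulas bound the coefficients of `g` by `C(m, k) · M(g)`; multiplicativity evaluates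
`M(f) = |a| ∏ max(1, |zᵢ|)` from the factorisation over `ℂ`, and Landau's inequality
`M(f) ≤ ‖f‖₂` (Jensen's inequality plus Parseval) gives the second bound.
-/

open Polynomial Finset

namespace Polynomial

theorem mahlerMeasure_prod {ι : Type*} (s : Finset ι) (p : ι → ℂ[X]) :
    (∏ i ∈ s, p i).mahlerMeasure = ∏ i ∈ s, (p i).mahlerMeasure := by
  classical
  induction s using Finset.induction_on with
  | empty => simp
  | insert i s hi ih => rw [prod_insert hi, prod_insert hi, mahlerMeasure_mul, ih]

theorem mahlerMeasure_C_mul_prod_X_sub_C {ι : Type*} (s : Finset ι) (a : ℂ) (z : ι → ℂ) :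
    (C a * ∏ i ∈ s, (X - C (z i))).mahlerMeasure = ‖a‖ * ∏ i ∈ s, max 1 ‖z i‖ := by
  simp only [mahlerMeasure_mul, mahlerMeasure_const, mahlerMeasure_prod, mahlerMeasure_X_sub_C]

theorem mahlerMeasure_le_sqrt_sum_range_sq_norm_coeff (p : ℂ[X]) :
    p.mahlerMeasure ≤ √(∑ i ∈ range (p.natDegree + 1), ‖p.coeff i‖ ^ 2) := by
  refine p.mahlerMeasure_le_sqrt_sum_sq_norm_coeff.trans (Real.sqrt_le_sqrt (le_of_eq ?_))
  refine sum_subset supp_subset_range_natDegree_succ fun i _ hi => ?_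
  rw [notMem_support_iff.mp hi, norm_zero, sq, mul_zero]

theorem mahlerMeasure_map_int_le_sqrt_sum_sq_coeff (f : ℤ[X]) :
    (f.map (Int.castRingHom ℂ)).mahlerMeasure ≤
      √(∑ i ∈ range (f.natDegree + 1), (f.coeff i : ℝ) ^ 2) := by
  simpa [natDegree_map_eq_of_injective (Int.castRingHom ℂ).injective_int] using
    (f.map (Int.castRingHom ℂ)).mahlerMeasure_le_sqrt_sum_range_sq_norm_coeff

theorem mahlerMeasure_map_int_le_of_dvd {f g : ℤ[X]} (hf : f ≠ 0) (hdvd : g ∣ f) :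
    (g.map (Int.castRingHom ℂ)).mahlerMeasure ≤ (f.map (Int.castRingHom ℂ)).mahlerMeasure := by
  obtain ⟨h, rfl⟩ := hdvd
  rw [Polynomial.map_mul, mahlerMeasure_mul]
  exact le_mul_of_one_le_right (mahlerMeasure_nonneg _)
    (one_le_mahlerMeasure_of_ne_zero (right_ne_zero_of_mul hf))

theorem abs_coeff_le_choose_mul_mahlerMeasure_of_dvd {f g : ℤ[X]} (hf : f ≠ 0) (hdvd : g ∣ f)
    (k : ℕ) :
    (|g.coeff k| : ℝ) ≤ g.natDegree.choose k * (f.map (Int.castRingHom ℂ)).mahlerMeasure :=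
  calc (|g.coeff k| : ℝ) = ‖(g.map (Int.castRingHom ℂ)).coeff k‖ := by simp
    _ ≤ (g.map (Int.castRingHom ℂ)).natDegree.choose k *
          (g.map (Int.castRingHom ℂ)).mahlerMeasure :=
      norm_coeff_le_choose_mul_mahlerMeasure k _
    _ ≤ g.natDegree.choose k * (f.map (Int.castRingHom ℂ)).mahlerMeasure := by
      rw [natDegree_map_eq_of_injective (Int.castRingHom ℂ).injective_int]
      gcongr
      exact mahlerMeasure_map_int_le_of_dvd hf hdvd

end Polynomial

theorem mignotte_factor_bound_general (f g : Polynomial ℤ) (hf : f ≠ 0)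
    (hdvd : g ∣ f) (n : ℕ) (a : ℂ) (z : Fin n → ℂ)
    (hfz : f.map (Int.castRingHom ℂ) = C a * ∏ i, (X - C (z i))) (k : ℕ) :
    (|g.coeff k| : ℝ) ≤ (g.natDegree.choose k : ℝ) * (‖a‖ * ∏ i, max 1 ‖z i‖) ∧
    (|g.coeff k| : ℝ) ≤ (g.natDegree.choose k : ℝ) *
      Real.sqrt (∑ i ∈ Finset.range (f.natDegree + 1), ((f.coeff i : ℝ)) ^ 2) := by
  have hmahler : (f.map (Int.castRingHom ℂ)).mahlerMeasure = ‖a‖ * ∏ i, max 1 ‖z i‖ := by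
    rw [hfz, mahlerMeasure_C_mul_prod_X_sub_C]
  have hcoeff := abs_coeff_le_choose_mul_mahlerMeasure_of_dvd hf hdvd k
  rw [hmahler] at hcoeff
  refine ⟨hcoeff, hcoeff.trans ?_⟩
  gcongr
  exact hmahler ▸ mahlerMeasure_map_int_le_sqrt_sum_sq_coeff f

/-- Mignotte's factor bound: if `g` divides `f` in `ℤ[X]`, both nonzero, with
`f = a ∏ (x - z_i)` over `ℂ`, then each coefficient of `g` satisfies
`|b_k| ≤ C(m, k) · M(f)`, and, via Landau's inequality `M(f) ≤ ‖f‖₂`, also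
`|b_k| ≤ C(m, k) · ‖f‖₂`. -/
theorem mignotte_factor_bound (f g : Polynomial ℤ) (hf : f ≠ 0) (hg : g ≠ 0)
    (hdvd : g ∣ f) (n : ℕ) (a : ℂ) (ha : a ≠ 0) (z : Fin n → ℂ)
    (hfz : f.map (Int.castRingHom ℂ) = C a * ∏ i, (X - C (z i))) (k : ℕ) :
    (|g.coeff k| : ℝ) ≤ (g.natDegree.choose k : ℝ) * (‖a‖ * ∏ i, max 1 ‖z i‖) ∧
    (|g.coeff k| : ℝ) ≤ (g.natDegree.choose k : ℝ) *
      Real.sqrt (∑ i ∈ Finset.range (f.natDegree + 1), ((f.coeff i : ℝ)) ^ 2) :=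
  mignotte_factor_bound_general f g hf hdvd n a z hfz k
end

section
/- For polynomials f, g of degrees k, m ≥ 1 over a commutative ring, there exist polynomials s, t with deg s < m and deg t < k such that Res(f, g) = s·f + t·g; in particular the resultant lies in the ideal generated by f and g. -/
open Polynomial Finset

/-- The Sylvester matrix of two polynomials. -/
noncomputable def sylvesterMatrix {R : Type*} [CommRing R] (f g : Polynomial R) :
    Matrix (Fin (f.natDegree + g.natDegree)) (Fin (f.natDegree + g.natDegree)) R :=
  Matrix.of fun i j =>
    if (j : ℕ) < g.natDegree then
      (if (j : ℕ) ≤ (i : ℕ) then f.coeff ((i : ℕ) - (j : ℕ)) else 0)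
    else
      (if (j : ℕ) - g.natDegree ≤ (i : ℕ) then g.coeff ((i : ℕ) - ((j : ℕ) - g.natDegree))
       else 0)

/-- The resultant of two polynomials, as the determinant of their Sylvester matrix. -/
noncomputable def resultant {R : Type*} [CommRing R] (f g : Polynomial R) : R :=
  (sylvesterMatrix f g).det

/-!
The Sylvester matrix is the matrix of `(s, t) ↦ s * f + t * g` from pairs of polynomials of
degrees `< (deg g, deg f)` to polynomials of degree `< deg f + deg g`. Composing this map with
the map of the adjugate gives `Res(f, g) • id`, and evaluating at the constant polynomial `1`
produces `s` and `t`. Mathlib proves this for `Polynomial.sylvester g f`, which is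
`sylvesterMatrix f g` up to the identification `Fin (deg f + deg g) = Fin (deg g + deg f)`.
-/

theorem Polynomial.natDegree_lt_of_degree_lt {R : Type*} [Semiring R] {p : R[X]} {n : ℕ}
    (h : p.degree < n) (hn : 0 < n) : p.natDegree < n := by
  rcases eq_or_ne p 0 with rfl | hp
  · simpa using hn
  · exact (natDegree_lt_iff_degree_lt hp).2 h

theorem Polynomial.ite_coeff_sub_eq_ite_and_le_natDegree {R : Type*} [Semiring R] (p : R[X])
    (a i : ℕ) :
    (if a ≤ i then p.coeff (i - a) else 0) =
      if a ≤ i ∧ i ≤ a + p.natDegree then p.coeff (i - a) else 0 := by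
  rw [ite_and]
  split_ifs <;> first | rfl | exact coeff_eq_zero_of_natDegree_lt (by omega)

theorem sylvesterMatrix_eq_reindex_sylvester {R : Type*} [CommRing R] (f g : R[X]) :
    sylvesterMatrix f g =
      (sylvester g f g.natDegree f.natDegree).reindex (finCongr (add_comm _ _))
        (finCongr (add_comm _ _)) := by
  ext i j
  obtain ⟨j, rfl⟩ := (finCongr (add_comm g.natDegree f.natDegree)).surjective j
  refine j.addCases (fun j => ?_) (fun j => ?_) <;>
    simp [sylvesterMatrix, sylvester, -Fin.val_fin_le, ite_coeff_sub_eq_ite_and_le_natDegree]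

theorem resultant_eq_polynomial_resultant_swap {R : Type*} [CommRing R] (f g : R[X]) :
    _root_.resultant f g = Polynomial.resultant g f := by
  rw [_root_.resultant, sylvesterMatrix_eq_reindex_sylvester, Matrix.det_reindex_self,
    Polynomial.resultant]

/-- Bézout-type representation of the resultant: `Res(f, g) = s·f + t·g` with
`deg s < deg g` and `deg t < deg f`; in particular the resultant lies in the ideal `⟨f, g⟩`. -/
theorem resultant_mem_ideal {R : Type*} [CommRing R] (f g : Polynomial R)
    (hk : 1 ≤ f.natDegree) (hm : 1 ≤ g.natDegree) :
    ∃ s t : Polynomial R, s.natDegree < g.natDegree ∧ t.natDegree < f.natDegree ∧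
      C (_root_.resultant f g) = s * f + t * g ∧
      C (_root_.resultant f g) ∈ Ideal.span {f, g} := by
  obtain ⟨t, s, ht, hs, hbezout⟩ :=
    exists_mul_add_mul_eq_C_resultant g f le_rfl le_rfl (.inl (by omega))
  have hrepr : C (_root_.resultant f g) = s * f + t * g := by
    rw [resultant_eq_polynomial_resultant_swap, ← hbezout]
    ring
  exact ⟨s, t, natDegree_lt_of_degree_lt hs hm, natDegree_lt_of_degree_lt ht hk, hrepr,
    Ideal.mem_span_pair.mpr ⟨s, t, hrepr.symm⟩⟩
end
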